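/- Let S be a nonempty finite set and let 1 ≤ k < n be integers. Fix r with 1 ≤ r ≤ n−k−1, tuples I, I' ∈ S^r, J ∈ S^k, and T, T' ∈ S^{n−k−r}. Then for every choice of real parameters π : S^k → ℝ and a^(ℓ) : S^{k+1} → ℝ (ℓ = k+1,…,n), the coordinates of the parametrized point p = φ(π, a) satisfy p_{IJT}·p_{I'JT'} = p_{IJT'}·p_{I'JT}, where IJT denotes the concatenated path of length n. -/
import Mathlib


open MvPolynomial

namespace MSM

variable {S : Type*}

/-- First `k` entries of a path of length `n`. -/
def pathInit {n k : ℕ} (hk : k ≤ n) (x : Fin n → S) : Fin k → S :=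
  fun i => x (Fin.castLE hk i)

/-- Length-`m` contiguous segment of a path starting at position `s` (0-indexed). -/
def seg {n : ℕ} (s m : ℕ) (h : s + m ≤ n) (x : Fin n → S) : Fin m → S :=
  fun t => x ⟨s + t.1, by have := t.isLt; omega⟩

/-- The contiguous window `(x_ℓ, …, x_{ℓ+k})` of length `k+1` starting at position `ℓ`
(0-indexed); these are the windows `(x_{ℓ-k},…,x_ℓ)`, `k+1 ≤ ℓ ≤ n`, in 1-indexed notation. -/
def window {n k : ℕ} (hkn : k < n) (ℓ : Fin (n - k)) (x : Fin n → S) : Fin (k + 1) → S :=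
  fun t => x ⟨ℓ.1 + t.1, by have := ℓ.isLt; have := t.isLt; omega⟩

/-- The nonhomogeneous `k`-th order multistate Markov parametrization `φ`. -/
def phi {n k : ℕ} (hkn : k < n) (pi : (Fin k → S) → ℝ)
    (a : Fin (n - k) → (Fin (k + 1) → S) → ℝ) : (Fin n → S) → ℝ :=
  fun x => pi (pathInit hkn.le x) * ∏ ℓ : Fin (n - k), a ℓ (window hkn ℓ x)

/-- The homogeneous `k`-th order multistate Markov parametrization `ψ`. -/
def psi {n k : ℕ} (hkn : k < n) (pi : (Fin k → S) → ℝ)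
    (a : (Fin (k + 1) → S) → ℝ) : (Fin n → S) → ℝ :=
  fun x => pi (pathInit hkn.le x) * ∏ ℓ : Fin (n - k), a (window hkn ℓ x)

/-- The vanishing ideal of a subset of `ℝ^{S^n}` inside `ℝ[p_x : x ∈ S^n]`. -/
noncomputable def vanishingIdeal {σ : Type*} (W : Set (σ → ℝ)) : Ideal (MvPolynomial σ ℝ) where
  carrier := { f | ∀ p ∈ W, MvPolynomial.eval p f = 0 }
  add_mem' := by
    intro f g hf hg p hp
    simp only [Set.mem_setOf_eq] at *
    rw [map_add, hf p hp, hg p hp, add_zero]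
  zero_mem' := by intro p hp; simp
  smul_mem' := by
    intro c f hf p hp
    simp only [Set.mem_setOf_eq] at *
    rw [smul_eq_mul, map_mul, hf p hp, mul_zero]

/-- Concatenation `I ++ J ++ T` as a path of length `n`. -/
def concat3 {r k m n : ℕ} (h : r + k + m = n) (I : Fin r → S) (J : Fin k → S)
    (T : Fin m → S) : Fin n → S :=
  fun i => Fin.append (Fin.append I J) T (Fin.cast h.symm i)

lemma concat3_apply {r k m n : ℕ} (h : r + k + m = n) (I : Fin r → S) (J : Fin k → S)
    (T : Fin m → S) (i : Fin n) :
    concat3 h I J T i =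
      if h1 : i.1 < r then I ⟨i.1, h1⟩
      else if h2 : i.1 < r + k then J ⟨i.1 - r, by omega⟩
      else T ⟨i.1 - (r + k), by have := i.isLt; omega⟩ := by
  unfold concat3
  split_ifs with h1 h2
  · have e1 : Fin.cast h.symm i = Fin.castAdd m (Fin.castAdd k ⟨i.1, h1⟩) := Fin.ext rfl
    rw [e1, Fin.append_left, Fin.append_left]
  · have e1 : Fin.cast h.symm i = Fin.castAdd m (Fin.natAdd r ⟨i.1 - r, by omega⟩) :=
      Fin.ext (by simp; omega)
    rw [e1, Fin.append_left, Fin.append_right]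
  · have e1 : Fin.cast h.symm i = Fin.natAdd (r + k) ⟨i.1 - (r + k), by have := i.isLt; omega⟩ :=
      Fin.ext (by simp; omega)
    rw [e1, Fin.append_right]

/-- The binomial relations `p_{IJT} p_{I'JT'} = p_{IJT'} p_{I'JT}` hold on the image of the
nonhomogeneous parametrization, for any real parameters. -/
theorem stmt1 (S : Type*) [Fintype S] [Nonempty S] (n k : ℕ) (hk : 1 ≤ k) (hkn : k < n)
    (r : ℕ) (hr : 1 ≤ r) (hrn : r + k + 1 ≤ n)
    (I I' : Fin r → S) (J : Fin k → S) (T T' : Fin (n - (r + k)) → S)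
    (pi : (Fin k → S) → ℝ) (a : Fin (n - k) → (Fin (k + 1) → S) → ℝ) :
    phi hkn pi a (concat3 (by omega) I J T) * phi hkn pi a (concat3 (by omega) I' J T')
      = phi hkn pi a (concat3 (by omega) I J T') *
        phi hkn pi a (concat3 (by omega) I' J T) := by
  have h : r + k + (n - (r + k)) = n := by omega
  set c := fun (I₀ : Fin r → S) (T₀ : Fin (n - (r + k)) → S) => concat3 h I₀ J T₀ with hc
  set F := fun (I₀ : Fin r → S) =>
    pi (pathInit hkn.le (c I₀ T)) *
      ∏ ℓ ∈ Finset.univ.filter (fun ℓ : Fin (n - k) => ℓ.1 < r), a ℓ (window hkn ℓ (c I₀ T))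
    with hF
  set G := fun (T₀ : Fin (n - (r + k)) → S) =>
    ∏ ℓ ∈ Finset.univ.filter (fun ℓ : Fin (n - k) => ¬ ℓ.1 < r), a ℓ (window hkn ℓ (c I T₀))
    with hG
  have key : ∀ (I₀ : Fin r → S) (T₀ : Fin (n - (r + k)) → S),
      phi hkn pi a (c I₀ T₀) = F I₀ * G T₀ := by
    intro I₀ T₀
    have hinit : pathInit hkn.le (c I₀ T₀) = pathInit hkn.le (c I₀ T) := by
      funext i
      simp only [pathInit, hc, concat3_apply, Fin.coe_castLE]
      have : i.1 < r + k := by have := i.isLt; omega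
      split_ifs <;> first | rfl | omega
    have hwinL : ∀ ℓ : Fin (n - k), ℓ.1 < r →
        window hkn ℓ (c I₀ T₀) = window hkn ℓ (c I₀ T) := by
      intro ℓ hℓ
      funext t
      simp only [window, hc, concat3_apply]
      have : ℓ.1 + t.1 < r + k := by have := t.isLt; omega
      split_ifs <;> first | rfl | omega
    have hwinR : ∀ ℓ : Fin (n - k), ¬ ℓ.1 < r →
        window hkn ℓ (c I₀ T₀) = window hkn ℓ (c I T₀) := by
      intro ℓ hℓ
      funext t
      simp only [window, hc, concat3_apply]
      have : r ≤ ℓ.1 + t.1 := by omega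
      split_ifs <;> first | rfl | omega
    rw [phi, ← Finset.prod_filter_mul_prod_filter_not Finset.univ (fun ℓ : Fin (n - k) => ℓ.1 < r),
      hinit, hF, hG, mul_assoc]
    congr 2
    · exact Finset.prod_congr rfl fun ℓ hℓ => by
        rw [hwinL ℓ (by simpa using hℓ)]
    · exact Finset.prod_congr rfl fun ℓ hℓ => by
        rw [hwinR ℓ (by simpa using hℓ)]
  show phi hkn pi a (c I T) * phi hkn pi a (c I' T') =
      phi hkn pi a (c I T') * phi hkn pi a (c I' T)
  rw [key, key, key, key]
  ring
end MSM
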